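/- arXiv:2602.00334 — 4 statements merged into one kernel-verified Lean document; each statement's English description precedes it below -/
import Mathlib

section
/- Let f : ℝ^d → ℝ be twice continuously differentiable with a global minimizer x*, and suppose there exist constants a > 0 and b > 0 such that for all x ∈ ℝ^d, a·(f(x) − f(x*)) + b·‖x − x*‖² ≤ ⟨x − x*, ∇f(x) − ∇f(x*)⟩. Let γ > 0, α > 0, ρ > 0, and let (x(t), p(t), ξ(t)) be a solution of the iKFAD dynamics with initial condition (x₀, p₀, ξ₀) ∈ ℝ^d × ℝ^d × ℝ^d with ξ₀ ≥ 0 componentwise. Then there exist constants κ > 0 and C ≥ 0 such that for all t ≥ 0, f(x(t)) − f(x*) + ‖p(t)‖ + ‖ξ(t)‖ ≤ C·e^{−κt}. -/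
/-!
Along the flow the energy `E = f x - f xstar + ‖p‖² / 2 + ρ / 2 ‖ξ‖²` satisfies
`E' = -γ ‖p‖² - αρ ‖ξ‖²`: the friction `⟪p, ξ ⋆ p⟫` is exactly cancelled by `⟪ξ, [p]²⟫ / ρ`.
Hence `ξ` stays in a fixed ball. Adding the cross terms `ε ⟪x - xstar, p⟫ + εγ / 2 ‖x - xstar‖²`
gives a Lyapunov function `W` with `W' ≤ -κ W`: the convexity-type hypothesis controls
`⟪x - xstar, ∇f x⟫`, and the bound on `ξ` controls `⟪x - xstar, ξ ⋆ p⟫`. Since `W` dominates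
`f x - f xstar + ‖p‖² / 4 + ρ / 2 ‖ξ‖²`, Grönwall gives decay at rate `κ` of this quantity, hence
at rate `κ / 2` of `‖p‖` and `‖ξ‖`.
-/

open RealInnerProductSpace

/-- Componentwise (Hadamard) product of two vectors in `ℝ^d`. -/
noncomputable def cwMul {d : ℕ} (a b : EuclideanSpace ℝ (Fin d)) :
    EuclideanSpace ℝ (Fin d) := WithLp.toLp 2 (fun i => a i * b i)

/-- Componentwise square of a vector in `ℝ^d`. -/
noncomputable def cwSq {d : ℕ} (a : EuclideanSpace ℝ (Fin d)) :
    EuclideanSpace ℝ (Fin d) := WithLp.toLp 2 (fun i => a i ^ 2)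

open Real

theorem le_mul_exp_of_hasDerivAt_le {W W' : ℝ → ℝ} {κ t : ℝ}
    (hW : ∀ s, 0 ≤ s → HasDerivAt W (W' s) s) (hle : ∀ s, 0 ≤ s → W' s ≤ -κ * W s)
    (ht : 0 ≤ t) : W t ≤ W 0 * exp (-κ * t) := by
  have := le_gronwallBound_of_liminf_deriv_right_le (a := 0) (b := t) (K := -κ) (ε := 0)
    (fun s hs => (hW s hs.1).continuousAt.continuousWithinAt)
    (fun s hs _ hr => (hW s hs.1).hasDerivWithinAt.liminf_right_slope_le hr) le_rfl
    (fun s hs => (hle s hs.1).trans_eq (add_zero _).symm) t ⟨ht, le_rfl⟩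
  simpa [gronwallBound_ε0] using this

theorem inner_cwMul_eq_inner_cwSq {d : ℕ} (a c : EuclideanSpace ℝ (Fin d)) :
    ⟪c, cwMul a c⟫ = ⟪a, cwSq c⟫ := by
  simp only [PiLp.inner_apply, RCLike.inner_apply, conj_trivial, cwMul, cwSq]
  exact Finset.sum_congr rfl fun i _ => by ring

theorem norm_cwMul_le {d : ℕ} (a c : EuclideanSpace ℝ (Fin d)) :
    ‖cwMul a c‖ ≤ ‖a‖ * ‖c‖ := by
  rw [EuclideanSpace.norm_eq, EuclideanSpace.norm_eq, EuclideanSpace.norm_eq,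
    ← sqrt_mul (by positivity), Finset.mul_sum]
  refine sqrt_le_sqrt (Finset.sum_le_sum fun i _ => ?_)
  simp only [cwMul, PiLp.toLp_apply, norm_mul, mul_pow]
  exact mul_le_mul_of_nonneg_right
    (Finset.single_le_sum (f := fun j => ‖a j‖ ^ 2) (fun j _ => by positivity)
      (Finset.mem_univ i)) (by positivity)

theorem neg_inner_cwMul_le {d : ℕ} (y a c : EuclideanSpace ℝ (Fin d)) :
    -⟪y, cwMul a c⟫ ≤ ‖a‖ * ‖y‖ * ‖c‖ :=
  calc -⟪y, cwMul a c⟫ ≤ ‖y‖ * ‖cwMul a c‖ := (neg_le_abs _).trans (abs_real_inner_le_norm _ _)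
    _ ≤ ‖y‖ * (‖a‖ * ‖c‖) := by gcongr; exact norm_cwMul_le a c
    _ = ‖a‖ * ‖y‖ * ‖c‖ := by ring

/-- `F, P, Y, Ξ` stand for `f x - f xstar, ‖p‖, ‖x - xstar‖, ‖ξ‖`, and `I, G, Z` for
`⟪x - xstar, p⟫, ⟪x - xstar, ∇f x⟫, ⟪x - xstar, ξ ⋆ p⟫`; the two sides are the derivative of the
Lyapunov function and `-κ` times its value. -/
theorem ikfad_decay_inequality {γ α ρ a b ε κ K F P Y Ξ I G Z : ℝ}
    (hρ : 0 < ρ) (hb : 0 < b) (hε : 0 < ε) (hεγ : ε ≤ γ / 2) (hεK : ε * K ≤ γ * b / 2)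
    (hκ : 0 ≤ κ) (hκa : κ ≤ ε * a) (hκγ : κ * (1 + ε) ≤ γ / 2) (hκα : κ ≤ 2 * α)
    (hκb : κ * (1 + γ) ≤ b) (hF : 0 ≤ F) (hΞK : Ξ ^ 2 ≤ K)
    (hI : I ≤ Y * P) (hZ : -Z ≤ Ξ * Y * P) (hG : a * F + b * Y ^ 2 ≤ G) :
    -((γ - ε) * P ^ 2) - α * ρ * Ξ ^ 2 - ε * G - ε * Z ≤
      -κ * (F + P ^ 2 / 2 + ρ / 2 * Ξ ^ 2 + ε * I + ε * γ / 2 * Y ^ 2) := by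
  -- AM-GM against the bound `Ξ² ≤ K` turns the friction cross term into `Y²` and `P²` terms
  have hZ' : ε * (-Z) ≤ ε * b / 2 * Y ^ 2 + γ / 4 * P ^ 2 := by
    have h1 : 2 * b * (Ξ * Y * P) ≤ b ^ 2 * Y ^ 2 + Ξ ^ 2 * P ^ 2 := by
      nlinarith [sq_nonneg (b * Y - Ξ * P)]
    have h2 : ε * Ξ ^ 2 * P ^ 2 ≤ γ * b / 2 * P ^ 2 := by
      gcongr; nlinarith
    nlinarith [mul_le_mul_of_nonneg_left hZ hε.le, mul_le_mul_of_nonneg_left h1 hε.le]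
  have hI' : κ * ε * I ≤ κ * ε / 2 * (Y ^ 2 + P ^ 2) := by
    have : I ≤ (Y ^ 2 + P ^ 2) / 2 := by nlinarith [sq_nonneg (Y - P)]
    nlinarith [mul_nonneg hκ hε.le]
  nlinarith [mul_le_mul_of_nonneg_left hG hε.le, mul_nonneg (sub_nonneg.2 hκa) hF,
    mul_nonneg (sub_nonneg.2 hκγ) (sq_nonneg P), mul_nonneg (sub_nonneg.2 hεγ) (sq_nonneg P),
    mul_nonneg (sub_nonneg.2 hκα) (mul_nonneg hρ.le (sq_nonneg Ξ)),
    mul_nonneg hε.le (mul_nonneg (sub_nonneg.2 hκb) (sq_nonneg Y))]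

theorem add_add_le_mul_exp_of_add_sq_le {u v w ρ C κ t : ℝ} (hu : 0 ≤ u) (hρ : 0 < ρ)
    (hC : 0 ≤ C) (hκt : 0 ≤ κ * t)
    (h : u + v ^ 2 / 4 + ρ / 2 * w ^ 2 ≤ C * exp (-κ * t)) :
    u + v + w ≤ (C + 2 * √C + √(2 * C / ρ)) * exp (-(κ / 2) * t) := by
  set e := exp (-(κ / 2) * t)
  have he : exp (-κ * t) = e ^ 2 := by rw [← exp_nat_mul]; ring_nf
  have he0 : 0 ≤ e := (exp_pos _).le
  have he1 : e ≤ 1 := exp_le_one_iff.2 (by linarith)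
  rw [he] at h
  have hu' : u ≤ C * e := by nlinarith [mul_nonneg hC (mul_nonneg he0 (sub_nonneg.2 he1))]
  have hv' : v ≤ 2 * √C * e := by
    rw [show 2 * √C * e = √(4 * C * e ^ 2) by
      rw [sqrt_mul' _ (sq_nonneg e), sqrt_sq he0, sqrt_mul' _ hC, show (4 : ℝ) = 2 ^ 2 by norm_num,
        sqrt_sq zero_le_two]]
    exact le_sqrt_of_sq_le (by nlinarith [mul_nonneg hρ.le (sq_nonneg w)])
  have hw' : w ≤ √(2 * C / ρ) * e := by
    rw [← sqrt_sq he0, ← sqrt_mul (by positivity)]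
    refine le_sqrt_of_sq_le ?_
    rw [div_mul_eq_mul_div, le_div_iff₀ hρ]
    nlinarith [sq_nonneg v]
  linarith

section

variable {d : ℕ}

structure IsIKFADSolution (f : EuclideanSpace ℝ (Fin d) → ℝ) (γ α ρ : ℝ)
    (x p ξ : ℝ → EuclideanSpace ℝ (Fin d)) : Prop where
  hasDerivAt_x : ∀ t, 0 ≤ t → HasDerivAt x (p t) t
  hasDerivAt_p : ∀ t, 0 ≤ t →
    HasDerivAt p (-gradient f (x t) - γ • p t - cwMul (ξ t) (p t)) t
  hasDerivAt_ξ : ∀ t, 0 ≤ t → HasDerivAt ξ (ρ⁻¹ • cwSq (p t) - α • ξ t) t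

noncomputable def ikfadEnergy (f : EuclideanSpace ℝ (Fin d) → ℝ)
    (xstar : EuclideanSpace ℝ (Fin d)) (ρ : ℝ) (x p ξ : ℝ → EuclideanSpace ℝ (Fin d)) (t : ℝ) : ℝ :=
  f (x t) - f xstar + ‖p t‖ ^ 2 / 2 + ρ / 2 * ‖ξ t‖ ^ 2

noncomputable def ikfadLyapunov (f : EuclideanSpace ℝ (Fin d) → ℝ)
    (xstar : EuclideanSpace ℝ (Fin d)) (γ ρ ε : ℝ) (x p ξ : ℝ → EuclideanSpace ℝ (Fin d))
    (t : ℝ) : ℝ :=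
  ikfadEnergy f xstar ρ x p ξ t + ε * ⟪x t - xstar, p t⟫ + ε * γ / 2 * ‖x t - xstar‖ ^ 2

theorem le_ikfadLyapunov {f : EuclideanSpace ℝ (Fin d) → ℝ} {xstar : EuclideanSpace ℝ (Fin d)}
    {γ ρ ε : ℝ} {x p ξ : ℝ → EuclideanSpace ℝ (Fin d)} (hγ : 0 < γ) (hε : 0 ≤ ε)
    (hεγ : ε ≤ γ / 2) (t : ℝ) :
    f (x t) - f xstar + ‖p t‖ ^ 2 / 4 + ρ / 2 * ‖ξ t‖ ^ 2 ≤
      ikfadLyapunov f xstar γ ρ ε x p ξ t := by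
  have hI : -(‖x t - xstar‖ * ‖p t‖) ≤ ⟪x t - xstar, p t⟫ :=
    neg_le_of_abs_le (abs_real_inner_le_norm _ _)
  suffices 0 ≤ 2 * γ * (‖p t‖ ^ 2 / 4 + ε * ⟪x t - xstar, p t⟫ + ε * γ / 2 * ‖x t - xstar‖ ^ 2) by
    unfold ikfadLyapunov ikfadEnergy
    nlinarith
  nlinarith [mul_nonneg hε (sq_nonneg (γ * ‖x t - xstar‖ - ‖p t‖)),
    mul_nonneg (sub_nonneg.2 hεγ) (sq_nonneg ‖p t‖), mul_le_mul_of_nonneg_left hI hε]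

namespace IsIKFADSolution

variable {f : EuclideanSpace ℝ (Fin d) → ℝ} {xstar : EuclideanSpace ℝ (Fin d)} {γ α ρ ε t : ℝ}
  {x p ξ : ℝ → EuclideanSpace ℝ (Fin d)}

theorem hasDerivAt_energy (h : IsIKFADSolution f γ α ρ x p ξ) (hf : Differentiable ℝ f)
    (hρ : ρ ≠ 0) (ht : 0 ≤ t) :
    HasDerivAt (ikfadEnergy f xstar ρ x p ξ) (-(γ * ‖p t‖ ^ 2) - α * ρ * ‖ξ t‖ ^ 2) t := by
  have hfx : HasDerivAt (fun s => f (x s)) ⟪gradient f (x t), p t⟫ t :=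
    (hasGradientAt_iff_hasFDerivAt.mp (hf (x t)).hasGradientAt).comp_hasDerivAt t
      (h.hasDerivAt_x t ht)
  refine (((hfx.sub_const (f xstar)).add ((h.hasDerivAt_p t ht).norm_sq.div_const 2)).add
    ((h.hasDerivAt_ξ t ht).norm_sq.const_mul (ρ / 2))).congr_deriv ?_
  -- the friction term `⟪p, ξ ⋆ p⟫` and the forcing term `⟪ξ, [p]²⟫ / ρ` cancel
  simp only [inner_sub_right, inner_neg_right, real_inner_smul_right, inner_cwMul_eq_inner_cwSq,
    real_inner_comm (p t), real_inner_self_eq_norm_sq]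
  field_simp
  ring

theorem energy_le_energy_zero (h : IsIKFADSolution f γ α ρ x p ξ) (hf : Differentiable ℝ f)
    (hγ : 0 ≤ γ) (hα : 0 ≤ α) (hρ : 0 < ρ) (ht : 0 ≤ t) :
    ikfadEnergy f xstar ρ x p ξ t ≤ ikfadEnergy f xstar ρ x p ξ 0 := by
  simpa using le_mul_exp_of_hasDerivAt_le (κ := 0)
    (fun s hs => h.hasDerivAt_energy (xstar := xstar) hf hρ.ne' hs)
    (fun s _ => by nlinarith [sq_nonneg ‖p s‖, sq_nonneg ‖ξ s‖, mul_nonneg hα hρ.le]) ht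

theorem hasDerivAt_lyapunov (h : IsIKFADSolution f γ α ρ x p ξ) (hf : Differentiable ℝ f)
    (hρ : ρ ≠ 0) (ht : 0 ≤ t) :
    HasDerivAt (ikfadLyapunov f xstar γ ρ ε x p ξ)
      (-((γ - ε) * ‖p t‖ ^ 2) - α * ρ * ‖ξ t‖ ^ 2 - ε * ⟪x t - xstar, gradient f (x t)⟫
        - ε * ⟪x t - xstar, cwMul (ξ t) (p t)⟫) t := by
  have hy := (h.hasDerivAt_x t ht).sub_const xstar
  refine (((h.hasDerivAt_energy hf hρ ht).add ((hy.inner ℝ (h.hasDerivAt_p t ht)).const_mul ε)).add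
    (hy.norm_sq.const_mul (ε * γ / 2))).congr_deriv ?_
  simp only [inner_sub_right, inner_neg_right, real_inner_smul_right,
    real_inner_self_eq_norm_sq]
  ring

theorem norm_sq_le_energy_zero (h : IsIKFADSolution f γ α ρ x p ξ) (hf : Differentiable ℝ f)
    (hmin : ∀ y, f xstar ≤ f y) (hγ : 0 ≤ γ) (hα : 0 ≤ α) (hρ : 0 < ρ) (ht : 0 ≤ t) :
    ‖ξ t‖ ^ 2 ≤ 2 / ρ * ikfadEnergy f xstar ρ x p ξ 0 := by
  have hE := h.energy_le_energy_zero (xstar := xstar) hf hγ hα hρ ht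
  rw [div_mul_eq_mul_div, le_div_iff₀ hρ]
  unfold ikfadEnergy at hE ⊢
  nlinarith [hmin (x t), sq_nonneg ‖p t‖]

theorem exists_lyapunov_decay (h : IsIKFADSolution f γ α ρ x p ξ) (hf : Differentiable ℝ f)
    (hmin : ∀ y, f xstar ≤ f y) {a b : ℝ} (ha : 0 < a) (hb : 0 < b)
    (hconv : ∀ z, a * (f z - f xstar) + b * ‖z - xstar‖ ^ 2 ≤ ⟪z - xstar, gradient f z⟫)
    (hγ : 0 < γ) (hα : 0 < α) (hρ : 0 < ρ) :
    ∃ ε, 0 < ε ∧ ε ≤ γ / 2 ∧ ∃ κ, 0 < κ ∧ ∀ t, 0 ≤ t →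
      ikfadLyapunov f xstar γ ρ ε x p ξ t ≤ ikfadLyapunov f xstar γ ρ ε x p ξ 0 * exp (-κ * t) := by
  set K := 2 / ρ * ikfadEnergy f xstar ρ x p ξ 0
  have hξK : ∀ s, 0 ≤ s → ‖ξ s‖ ^ 2 ≤ K := fun s hs =>
    h.norm_sq_le_energy_zero hf hmin hγ.le hα.le hρ hs
  have hK : 0 ≤ K := (sq_nonneg _).trans (hξK 0 le_rfl)
  set ε := γ * b / (2 * (b + K))
  have hε : 0 < ε := by positivity
  have hεγ : ε ≤ γ / 2 := by
    rw [div_le_div_iff₀ (by positivity) two_pos]; nlinarith [mul_nonneg hγ.le hK]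
  have hεK : ε * K ≤ γ * b / 2 := by
    rw [div_mul_eq_mul_div, div_le_div_iff₀ (by positivity) two_pos]
    nlinarith [mul_pos (mul_pos hγ hb) hb]
  set κ := min (min (ε * a) (2 * α)) (min (γ / 2 / (1 + ε)) (b / (1 + γ)))
  have hκ : 0 < κ := by positivity
  have hκa : κ ≤ ε * a := (min_le_left _ _).trans (min_le_left _ _)
  have hκα : κ ≤ 2 * α := (min_le_left _ _).trans (min_le_right _ _)
  have hκγ : κ * (1 + ε) ≤ γ / 2 :=
    (le_div_iff₀ (by positivity)).1 ((min_le_right _ _).trans (min_le_left _ _))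
  have hκb : κ * (1 + γ) ≤ b :=
    (le_div_iff₀ (by positivity)).1 ((min_le_right _ _).trans (min_le_right _ _))
  refine ⟨ε, hε, hεγ, κ, hκ, fun t ht => le_mul_exp_of_hasDerivAt_le
    (fun s hs => h.hasDerivAt_lyapunov hf hρ.ne' hs) (fun s hs => ?_) ht⟩
  exact ikfad_decay_inequality hρ hb hε hεγ hεK hκ.le hκa hκγ hκα hκb (sub_nonneg.2 (hmin _))
    (hξK s hs) (real_inner_le_norm _ _) (neg_inner_cwMul_le _ _ _) (hconv _)

end IsIKFADSolution

end

theorem ikfad_continuous_exponential_convergence_general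
    (d : ℕ) (f : EuclideanSpace ℝ (Fin d) → ℝ)
    (hf : ContDiff ℝ 2 f)
    (xstar : EuclideanSpace ℝ (Fin d)) (hmin : ∀ y, f xstar ≤ f y)
    (a b : ℝ) (ha : 0 < a) (hb : 0 < b)
    (hconv : ∀ x : EuclideanSpace ℝ (Fin d),
      a * (f x - f xstar) + b * ‖x - xstar‖ ^ 2 ≤
        ⟪x - xstar, gradient f x - gradient f xstar⟫)
    (γ α ρ : ℝ) (hγ : 0 < γ) (hα : 0 < α) (hρ : 0 < ρ)
    (x p ξ : ℝ → EuclideanSpace ℝ (Fin d))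
    (hx : ∀ t, 0 ≤ t → HasDerivAt x (p t) t)
    (hp : ∀ t, 0 ≤ t → HasDerivAt p
      (-gradient f (x t) - γ • p t - cwMul (ξ t) (p t)) t)
    (hξ : ∀ t, 0 ≤ t → HasDerivAt ξ (ρ⁻¹ • cwSq (p t) - α • ξ t) t) :
    ∃ κ : ℝ, 0 < κ ∧ ∃ C : ℝ, 0 ≤ C ∧ ∀ t : ℝ, 0 ≤ t →
      f (x t) - f xstar + ‖p t‖ + ‖ξ t‖ ≤ C * Real.exp (-κ * t) := by
  have hfd : Differentiable ℝ f := hf.differentiable (by norm_num)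
  have hgrad : gradient f xstar = 0 := by
    simp [gradient, IsLocalMin.fderiv_eq_zero (Filter.Eventually.of_forall hmin)]
  have hsol : IsIKFADSolution f γ α ρ x p ξ := ⟨hx, hp, hξ⟩
  obtain ⟨ε, hε, hεγ, κ, hκ, hdecay⟩ := hsol.exists_lyapunov_decay hfd hmin ha hb
    (fun z => by simpa [hgrad] using hconv z) hγ hα hρ
  set W := ikfadLyapunov f xstar γ ρ ε x p ξ
  have hlow : ∀ t, f (x t) - f xstar + ‖p t‖ ^ 2 / 4 + ρ / 2 * ‖ξ t‖ ^ 2 ≤ W t :=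
    le_ikfadLyapunov hγ hε.le hεγ
  have hW0 : 0 ≤ W 0 := by
    nlinarith [hlow 0, hmin (x 0), sq_nonneg ‖p 0‖, mul_nonneg hρ.le (sq_nonneg ‖ξ 0‖)]
  refine ⟨κ / 2, half_pos hκ, W 0 + 2 * √(W 0) + √(2 * W 0 / ρ), by positivity, fun t ht => ?_⟩
  exact add_add_le_mul_exp_of_add_sq_le (sub_nonneg.2 (hmin _)) hρ hW0 (by positivity)
    ((hlow t).trans (hdecay t ht))

/-- Exponential convergence of the continuous iKFAD dynamics
`ẋ = p`, `ṗ = -∇f(x) - γp - ξ ⋆ p`, `ξ̇ = [p]²/ρ - αξ`. -/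
theorem ikfad_continuous_exponential_convergence
    (d : ℕ) (f : EuclideanSpace ℝ (Fin d) → ℝ)
    (hf : ContDiff ℝ 2 f)
    (xstar : EuclideanSpace ℝ (Fin d)) (hmin : ∀ y, f xstar ≤ f y)
    (a b : ℝ) (ha : 0 < a) (hb : 0 < b)
    (hconv : ∀ x : EuclideanSpace ℝ (Fin d),
      a * (f x - f xstar) + b * ‖x - xstar‖ ^ 2 ≤
        ⟪x - xstar, gradient f x - gradient f xstar⟫)
    (γ α ρ : ℝ) (hγ : 0 < γ) (hα : 0 < α) (hρ : 0 < ρ)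
    (x p ξ : ℝ → EuclideanSpace ℝ (Fin d))
    (hξ0 : ∀ i, 0 ≤ ξ 0 i)
    (hx : ∀ t, 0 ≤ t → HasDerivAt x (p t) t)
    (hp : ∀ t, 0 ≤ t → HasDerivAt p
      (-gradient f (x t) - γ • p t - cwMul (ξ t) (p t)) t)
    (hξ : ∀ t, 0 ≤ t → HasDerivAt ξ (ρ⁻¹ • cwSq (p t) - α • ξ t) t) :
    ∃ κ : ℝ, 0 < κ ∧ ∃ C : ℝ, 0 ≤ C ∧ ∀ t : ℝ, 0 ≤ t →
      f (x t) - f xstar + ‖p t‖ + ‖ξ t‖ ≤ C * Real.exp (-κ * t) :=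
  ikfad_continuous_exponential_convergence_general d f hf xstar hmin a b ha hb hconv γ α ρ hγ hα hρ
    x p ξ hx hp hξ
end

section
/- Let f : ℝ^d → ℝ be smooth with f(x) → +∞ as ‖x‖ → +∞ and with a global minimum value f(x*). Let γ > 0, α > 0, ρ > 0, and let (x, p, ξ) be a solution of the iKFAD dynamics on [0, ∞) with initial condition (x₀, p₀, ξ₀) ∈ ℝ^d × ℝ^d × ℝ^d with ξ₀ ≥ 0 componentwise. Then there exists R > 0 such that for all t ≥ 0, ‖x(t)‖ ≤ R, ‖p(t)‖ ≤ R, and ‖ξ(t)‖ ≤ R. -/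
open Filter

open scoped RealInnerProductSpace

lemma cw_inner_key {d : ℕ} (a b : EuclideanSpace ℝ (Fin d)) :
    ⟪b, cwMul a b⟫ = ⟪a, cwSq b⟫ := by
  simp only [PiLp.inner_apply, RCLike.inner_apply, starRingEnd_apply, star_trivial,
    cwMul, cwSq, PiLp.toLp_apply]
  exact Finset.sum_congr rfl fun i _ => by ring

/-- Solutions of the iKFAD dynamics remain bounded for all positive times
when `f` is smooth and coercive. -/
theorem ikfad_solutions_bounded
    (d : ℕ) (f : EuclideanSpace ℝ (Fin d) → ℝ)
    (hf : ContDiff ℝ (⊤ : ℕ∞) f)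
    (hcoercive : Tendsto f (Filter.comap (fun x => ‖x‖) atTop) atTop)
    (xstar : EuclideanSpace ℝ (Fin d)) (hmin : ∀ y, f xstar ≤ f y)
    (γ α ρ : ℝ) (hγ : 0 < γ) (hα : 0 < α) (hρ : 0 < ρ)
    (x p ξ : ℝ → EuclideanSpace ℝ (Fin d))
    (hξ0 : ∀ i, 0 ≤ ξ 0 i)
    (hx : ∀ t, 0 ≤ t → HasDerivAt x (p t) t)
    (hp : ∀ t, 0 ≤ t → HasDerivAt p
      (-gradient f (x t) - γ • p t - cwMul (ξ t) (p t)) t)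
    (hξ : ∀ t, 0 ≤ t → HasDerivAt ξ (ρ⁻¹ • cwSq (p t) - α • ξ t) t) :
    ∃ R : ℝ, 0 < R ∧ ∀ t : ℝ, 0 ≤ t →
      ‖x t‖ ≤ R ∧ ‖p t‖ ≤ R ∧ ‖ξ t‖ ≤ R := by
  classical
  obtain ⟨E, hEdef⟩ : ∃ E : ℝ → ℝ, E = fun s =>
      f (x s) + (1 / 2 : ℝ) * ⟪p s, p s⟫ + (ρ / 2) * ⟪ξ s, ξ s⟫ := ⟨_, rfl⟩
  -- derivative of the energy
  have hE : ∀ t, 0 ≤ t → HasDerivAt E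
      (-(γ * ⟪p t, p t⟫) - α * ρ * ⟪ξ t, ξ t⟫) t := by
    intro t ht
    have hdf : DifferentiableAt ℝ f (x t) := (hf.differentiable (by simp)).differentiableAt
    have h1 : HasDerivAt (fun s => f (x s)) ⟪gradient f (x t), p t⟫ t := by
      have := hdf.hasGradientAt.hasFDerivAt.comp_hasDerivAt t (hx t ht)
      simp [InnerProductSpace.toDual_apply_apply] at this ⊢
      exact this
    have h2 := (hp t ht).inner ℝ (hp t ht)
    have h3 := (hξ t ht).inner ℝ (hξ t ht)
    have hD := (h1.add (HasDerivAt.const_mul ((1:ℝ)/2) h2)).add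
      (HasDerivAt.const_mul (ρ/2) h3)
    have heq :
        ⟪gradient f (x t), p t⟫ +
          (1 / 2 : ℝ) *
            (⟪p t, -gradient f (x t) - γ • p t - cwMul (ξ t) (p t)⟫ +
              ⟪-gradient f (x t) - γ • p t - cwMul (ξ t) (p t), p t⟫) +
          (ρ / 2) *
            (⟪ξ t, ρ⁻¹ • cwSq (p t) - α • ξ t⟫ +
              ⟪ρ⁻¹ • cwSq (p t) - α • ξ t, ξ t⟫) =
        -(γ * ⟪p t, p t⟫) - α * ρ * ⟪ξ t, ξ t⟫ := by
      have hPP : ⟪p t, -gradient f (x t) - γ • p t - cwMul (ξ t) (p t)⟫ =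
          -⟪gradient f (x t), p t⟫ - γ * ⟪p t, p t⟫ - ⟪ξ t, cwSq (p t)⟫ := by
        rw [inner_sub_right, inner_sub_right, inner_neg_right, real_inner_smul_right,
          cw_inner_key (ξ t) (p t), real_inner_comm (p t) (gradient f (x t))]
      have hXX : ⟪ξ t, ρ⁻¹ • cwSq (p t) - α • ξ t⟫ =
          ρ⁻¹ * ⟪ξ t, cwSq (p t)⟫ - α * ⟪ξ t, ξ t⟫ := by
        rw [inner_sub_right, real_inner_smul_right, real_inner_smul_right]
      have hPP2 : ⟪-gradient f (x t) - γ • p t - cwMul (ξ t) (p t), p t⟫ =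
          -⟪gradient f (x t), p t⟫ - γ * ⟪p t, p t⟫ - ⟪ξ t, cwSq (p t)⟫ := by
        rw [real_inner_comm]; exact hPP
      have hXX2 : ⟪ρ⁻¹ • cwSq (p t) - α • ξ t, ξ t⟫ =
          ρ⁻¹ * ⟪ξ t, cwSq (p t)⟫ - α * ⟪ξ t, ξ t⟫ := by
        rw [real_inner_comm]; exact hXX
      rw [hPP, hPP2, hXX, hXX2]
      field_simp
      ring
    rw [← heq, hEdef]
    exact hD
  -- the energy is nonincreasing on [0, ∞)
  have hcont : ContinuousOn E (Set.Ici (0 : ℝ)) := fun t ht =>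
    ((hE t ht).continuousAt).continuousWithinAt
  have hanti : AntitoneOn E (Set.Ici (0 : ℝ)) := by
    apply antitoneOn_of_deriv_nonpos (convex_Ici 0) hcont
    · intro t ht
      rw [interior_Ici] at ht
      exact ((hE t ht.le).differentiableAt).differentiableWithinAt
    · intro t ht
      rw [interior_Ici] at ht
      rw [(hE t ht.le).deriv]
      have h1 : (0:ℝ) ≤ ⟪p t, p t⟫ := real_inner_self_nonneg
      have h2 : (0:ℝ) ≤ ⟪ξ t, ξ t⟫ := real_inner_self_nonneg
      nlinarith [mul_nonneg hγ.le h1, mul_nonneg (mul_nonneg hα.le hρ.le) h2]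
  have hEle : ∀ t, 0 ≤ t → E t ≤ E 0 :=
    fun t ht => hanti (Set.self_mem_Ici) ht ht
  -- basic bounds from the energy
  have hfb : ∀ t, 0 ≤ t → f (x t) ≤ E 0 := by
    intro t ht
    have h1 : (0:ℝ) ≤ ⟪p t, p t⟫ := real_inner_self_nonneg
    have h2 : (0:ℝ) ≤ ⟪ξ t, ξ t⟫ := real_inner_self_nonneg
    have hEt : E t = f (x t) + (1 / 2 : ℝ) * ⟪p t, p t⟫ + (ρ / 2) * ⟪ξ t, ξ t⟫ := by rw [hEdef]
    have := hEle t ht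
    nlinarith [mul_nonneg hρ.le h2]
  obtain ⟨B, hBdef⟩ : ∃ B : ℝ, B = E 0 - f xstar := ⟨_, rfl⟩
  have hB0 : 0 ≤ B := by
    have := hfb 0 le_rfl
    have := hmin (x 0)
    simp only [hBdef]
    linarith
  have hpb : ∀ t, 0 ≤ t → ‖p t‖ ^ 2 ≤ 2 * B := by
    intro t ht
    have h2 : (0:ℝ) ≤ ⟪ξ t, ξ t⟫ := real_inner_self_nonneg
    have hE' := hEle t ht
    have hm := hmin (x t)
    have hEt : E t = f (x t) + (1 / 2 : ℝ) * ⟪p t, p t⟫ + (ρ / 2) * ⟪ξ t, ξ t⟫ := by rw [hEdef]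
    have hn : ⟪p t, p t⟫ = ‖p t‖ ^ 2 := real_inner_self_eq_norm_sq (p t)
    have hEt' : E t = f (x t) + (1 / 2 : ℝ) * ‖p t‖ ^ 2 + (ρ / 2) * ⟪ξ t, ξ t⟫ := by
      rw [hEt, hn]
    simp only [hBdef]
    nlinarith [mul_nonneg hρ.le h2]
  have hξb : ∀ t, 0 ≤ t → ‖ξ t‖ ^ 2 ≤ 2 * B / ρ := by
    intro t ht
    have h1 : (0:ℝ) ≤ ⟪p t, p t⟫ := real_inner_self_nonneg
    have hE' := hEle t ht
    have hm := hmin (x t)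
    have hEt : E t = f (x t) + (1 / 2 : ℝ) * ⟪p t, p t⟫ + (ρ / 2) * ⟪ξ t, ξ t⟫ := by rw [hEdef]
    have hn : ⟪ξ t, ξ t⟫ = ‖ξ t‖ ^ 2 := real_inner_self_eq_norm_sq (ξ t)
    have hEt' : E t = f (x t) + (1 / 2 : ℝ) * ⟪p t, p t⟫ + (ρ / 2) * ‖ξ t‖ ^ 2 := by
      rw [hEt, hn]
    rw [le_div_iff₀ hρ]
    simp only [hBdef]
    nlinarith
  -- bound on x from coercivity
  have hcoer : ∃ C : ℝ, ∀ y : EuclideanSpace ℝ (Fin d), C ≤ ‖y‖ → E 0 + 1 ≤ f y := by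
    have := hcoercive.eventually (eventually_ge_atTop (E 0 + 1))
    rw [eventually_comap] at this
    rcases (eventually_atTop.1 this) with ⟨C, hC⟩
    exact ⟨C, fun y hy => hC ‖y‖ hy y rfl⟩
  rcases hcoer with ⟨C, hC⟩
  have hxb : ∀ t, 0 ≤ t → ‖x t‖ ≤ C := by
    intro t ht
    by_contra h
    push_neg at h
    have := hC (x t) h.le
    have := hfb t ht
    linarith
  -- assemble the bound
  obtain ⟨R, hRdef⟩ : ∃ R : ℝ,
    R = max (max C (Real.sqrt (2 * B))) (Real.sqrt (2 * B / ρ)) + 1 := ⟨_, rfl⟩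
  have hC0 : 0 ≤ C := le_trans (norm_nonneg (x 0)) (hxb 0 le_rfl)
  refine ⟨R, ?_, ?_⟩
  · have : (0:ℝ) ≤ max (max C (Real.sqrt (2 * B))) (Real.sqrt (2 * B / ρ)) :=
      le_trans hC0 (le_trans (le_max_left _ _) (le_max_left _ _))
    simp only [hRdef]
    linarith
  · intro t ht
    refine ⟨?_, ?_, ?_⟩
    · calc ‖x t‖ ≤ C := hxb t ht
        _ ≤ R := by
          simp only [hRdef]
          have := le_trans (le_max_left C (Real.sqrt (2 * B))) (le_max_left _ (Real.sqrt (2 * B / ρ)))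
          linarith
    · have h1 : ‖p t‖ ≤ Real.sqrt (2 * B) := by
        rw [Real.le_sqrt (norm_nonneg _) (by linarith)]
        exact hpb t ht
      calc ‖p t‖ ≤ Real.sqrt (2 * B) := h1
        _ ≤ R := by
          simp only [hRdef]
          have := le_trans (le_max_right C (Real.sqrt (2 * B)))
            (le_max_left (max C (Real.sqrt (2 * B))) (Real.sqrt (2 * B / ρ)))
          linarith
    · have h1 : ‖ξ t‖ ≤ Real.sqrt (2 * B / ρ) := by
        rw [Real.le_sqrt (norm_nonneg _) (by positivity)]
        exact hξb t ht
      calc ‖ξ t‖ ≤ Real.sqrt (2 * B / ρ) := h1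
        _ ≤ R := by
          simp only [hRdef]
          have := le_max_right (max C (Real.sqrt (2 * B))) (Real.sqrt (2 * B / ρ))
          linarith
end

section
/- Let f : ℝ^d → ℝ be continuously differentiable and let γ, α, ρ, δt > 0. A point (x, p, ξ) ∈ ℝ^d × ℝ^d × ℝ^d with ξ ≥ 0 componentwise is a fixed point of the discrete iKFAD iteration (i.e., one step of the iteration maps (x, p, ξ) to itself) if and only if p = 0, ξ = 0, and ∇f(x) = 0, i.e., if and only if it is an equilibrium of the continuous iKFAD dynamics. -/
/-!
Since `x⁺ - x = δt · p⁺`, a fixed point has `p⁺ = 0`, and then the momentum equation `p⁺ = p`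
gives `p = 0` and `δt ∇f(x) = e^{-(γ+ξ)δt} p = 0`. With `p = 0` the friction update is
`ξᵢ ↦ e^{-αδt} ξᵢ`, a strict contraction on `ξᵢ ≥ 0` whose only fixed point is `0`.
-/

open Real

theorem eq_zero_and_eq_zero_of_momentum_position_fixed {c p g x δt : ℝ} (hδt : δt ≠ 0)
    (hp : c * p - δt * g = p) (hx : x + δt * (c * p) - δt ^ 2 * g = x) : p = 0 ∧ g = 0 := by
  have hcp : c * p - δt * g = 0 := by
    apply (mul_eq_zero.mp _).resolve_left hδt
    linear_combination hx
  have hp0 : p = 0 := by linarith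
  refine ⟨hp0, (mul_eq_zero.mp ?_).resolve_left hδt⟩
  simpa [hp0] using hcp

theorem eq_zero_of_exp_neg_mul_sqrt_sq_eq {κ ξ : ℝ} (hκ : 0 < κ) (hξ : 0 ≤ ξ)
    (h : exp (-κ) * √(ξ ^ 2) = ξ) : ξ = 0 := by
  rw [sqrt_sq hξ] at h
  have hexp : exp (-κ) ≠ 1 := by simpa using hκ.ne'
  have : (exp (-κ) - 1) * ξ = 0 := by linear_combination h
  exact (mul_eq_zero.mp this).resolve_left (sub_ne_zero.mpr hexp)

theorem ikfad_discrete_fixed_points_general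
    (d : ℕ) (f : EuclideanSpace ℝ (Fin d) → ℝ)
    (γ α ρ δt : ℝ) (hα : 0 < α) (hδt : 0 < δt)
    (x p ξ : EuclideanSpace ℝ (Fin d)) (hξ : ∀ i, 0 ≤ ξ i) :
    ((∀ i, Real.exp (-(γ + ξ i) * δt) * p i - δt * gradient f x i = p i) ∧
     (∀ i, x i + δt * (Real.exp (-(γ + ξ i) * δt) * p i) -
        δt ^ 2 * gradient f x i = x i) ∧
     (∀ i, Real.exp (-α * δt) *
        Real.sqrt ((ξ i) ^ 2 + (1 - Real.exp (-2 * ξ i * δt)) * (p i) ^ 2 / ρ)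
          = ξ i)) ↔
    (p = 0 ∧ ξ = 0 ∧ gradient f x = 0) := by
  constructor
  · rintro ⟨hp, hx, hξfix⟩
    have hpg i := eq_zero_and_eq_zero_of_momentum_position_fixed hδt.ne' (hp i) (hx i)
    have hξ0 i : ξ i = 0 := by
      refine eq_zero_of_exp_neg_mul_sqrt_sq_eq (mul_pos hα hδt) (hξ i) ?_
      simpa [(hpg i).1, neg_mul] using hξfix i
    refine ⟨?_, ?_, ?_⟩ <;> ext i
    exacts [(hpg i).1, hξ0 i, (hpg i).2]
  · rintro ⟨rfl, rfl, hg⟩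
    simp [hg]

/-- A point `(x, p, ξ)` with `ξ ≥ 0` componentwise is a fixed point of one step
of the discrete iKFAD iteration
`p⁺ = e^{-(γ+ξᵢ)δt} pᵢ - δt (∇f(x))ᵢ`,
`x⁺ = xᵢ + δt e^{-(γ+ξᵢ)δt} pᵢ - δt² (∇f(x))ᵢ`,
`ξ⁺ = e^{-αδt} √(ξᵢ² + (1 - e^{-2ξᵢδt}) pᵢ²/ρ)`
iff `p = 0`, `ξ = 0`, and `∇f(x) = 0`, i.e. iff it is an equilibrium of the
continuous iKFAD dynamics. -/
theorem ikfad_discrete_fixed_points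
    (d : ℕ) (f : EuclideanSpace ℝ (Fin d) → ℝ)
    (hf : ContDiff ℝ 1 f)
    (γ α ρ δt : ℝ) (hγ : 0 < γ) (hα : 0 < α) (hρ : 0 < ρ) (hδt : 0 < δt)
    (x p ξ : EuclideanSpace ℝ (Fin d)) (hξ : ∀ i, 0 ≤ ξ i) :
    ((∀ i, Real.exp (-(γ + ξ i) * δt) * p i - δt * gradient f x i = p i) ∧
     (∀ i, x i + δt * (Real.exp (-(γ + ξ i) * δt) * p i) -
        δt ^ 2 * gradient f x i = x i) ∧
     (∀ i, Real.exp (-α * δt) *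
        Real.sqrt ((ξ i) ^ 2 + (1 - Real.exp (-2 * ξ i * δt)) * (p i) ^ 2 / ρ)
          = ξ i)) ↔
    (p = 0 ∧ ξ = 0 ∧ gradient f x = 0) :=
  ikfad_discrete_fixed_points_general d f γ α ρ δt hα hδt x p ξ hξ
end

section
/- Let ρ > 0 and let (p, ξ) : [0, T] → ℝ^d × ℝ^d be a differentiable solution of the subsystem ṗ = −ξ ⋆ p, ξ̇ = [p]²/ρ. Then for each coordinate i, the quantity p_i(t)² + ρ·ξ_i(t)² is constant in t; equivalently, for all t ∈ [0, T] and all i, p_i(t)² + ρ·ξ_i(t)² = p_i(0)² + ρ·ξ_i(0)². -/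
/-! In each coordinate the two contributions to the derivative of `pᵢ² + ρ ξᵢ²` cancel:
`2 pᵢ (-ξᵢ pᵢ) + 2 ρ ξᵢ (pᵢ² / ρ) = 0`, so the quantity is constant on `[0, T]`. -/

open Set

theorem HasDerivAt.piLp_apply {𝕜 ι : Type*} {E : ι → Type*} [NontriviallyNormedField 𝕜]
    [Fintype ι] [∀ i, NormedAddCommGroup (E i)] [∀ i, NormedSpace 𝕜 (E i)] {q : ENNReal}
    [Fact (1 ≤ q)] {f : 𝕜 → PiLp q E} {f' : PiLp q E} {x : 𝕜} (hf : HasDerivAt f f' x)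
    (i : ι) : HasDerivAt (fun s => f s i) (f' i) x :=
  (PiLp.hasFDerivAt_apply q (f x) i).comp_hasDerivAt x hf

theorem constant_of_hasDerivAt_zero {E : Type*} [NormedAddCommGroup E] [NormedSpace ℝ E]
    {f : ℝ → E} {a b : ℝ} (hf : ∀ x ∈ Icc a b, HasDerivAt f 0 x) :
    ∀ x ∈ Icc a b, f x = f a :=
  constant_of_has_deriv_right_zero (fun x hx => (hf x hx).continuousAt.continuousWithinAt)
    fun x hx => (hf x (Ico_subset_Icc_self hx)).hasDerivWithinAt

@[simp]
theorem cwMul_apply {d : ℕ} (a b : EuclideanSpace ℝ (Fin d)) (i : Fin d) :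
    cwMul a b i = a i * b i :=
  rfl

@[simp]
theorem cwSq_apply {d : ℕ} (a : EuclideanSpace ℝ (Fin d)) (i : Fin d) : cwSq a i = a i ^ 2 :=
  rfl

theorem hasDerivAt_sq_add_mul_sq_eq_zero {x y : ℝ → ℝ} {ρ t : ℝ} (hρ : ρ ≠ 0)
    (hx : HasDerivAt x (-(y t * x t)) t) (hy : HasDerivAt y (ρ⁻¹ * x t ^ 2) t) :
    HasDerivAt (fun s => x s ^ 2 + ρ * y s ^ 2) 0 t := by
  refine ((hx.fun_pow 2).add ((hy.fun_pow 2).const_mul ρ)).congr_deriv ?_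
  field_simp
  ring

theorem ikfad_C_step_invariant_general
    (d : ℕ) (ρ : ℝ) (hρ : 0 < ρ) (T : ℝ)
    (p ξ : ℝ → EuclideanSpace ℝ (Fin d))
    (hp : ∀ t ∈ Set.Icc (0 : ℝ) T, HasDerivAt p (-cwMul (ξ t) (p t)) t)
    (hξ : ∀ t ∈ Set.Icc (0 : ℝ) T, HasDerivAt ξ (ρ⁻¹ • cwSq (p t)) t) :
    ∀ t ∈ Set.Icc (0 : ℝ) T, ∀ i : Fin d,
      (p t i) ^ 2 + ρ * (ξ t i) ^ 2 = (p 0 i) ^ 2 + ρ * (ξ 0 i) ^ 2 := by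
  intro t ht i
  refine constant_of_hasDerivAt_zero (f := fun s => p s i ^ 2 + ρ * ξ s i ^ 2)
    (fun s hs => ?_) t ht
  have hpi := (hp s hs).piLp_apply i
  have hξi := (hξ s hs).piLp_apply i
  simp only [PiLp.neg_apply, PiLp.smul_apply, cwMul_apply, cwSq_apply, smul_eq_mul] at hpi hξi
  exact hasDerivAt_sq_add_mul_sq_eq_zero hρ.ne' hpi hξi

/-- Along the `C` step subsystem `ṗ = -ξ ⋆ p`, `ξ̇ = [p]²/ρ` of the iKFAD
splitting, the quantity `pᵢ(t)² + ρ ξᵢ(t)²` is conserved in each coordinate. -/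
theorem ikfad_C_step_invariant
    (d : ℕ) (ρ : ℝ) (hρ : 0 < ρ) (T : ℝ) (hT : 0 ≤ T)
    (p ξ : ℝ → EuclideanSpace ℝ (Fin d))
    (hp : ∀ t ∈ Set.Icc (0 : ℝ) T, HasDerivAt p (-cwMul (ξ t) (p t)) t)
    (hξ : ∀ t ∈ Set.Icc (0 : ℝ) T, HasDerivAt ξ (ρ⁻¹ • cwSq (p t)) t) :
    ∀ t ∈ Set.Icc (0 : ℝ) T, ∀ i : Fin d,
      (p t i) ^ 2 + ρ * (ξ t i) ^ 2 = (p 0 i) ^ 2 + ρ * (ξ 0 i) ^ 2 :=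
  ikfad_C_step_invariant_general d ρ hρ T p ξ hp hξ
end
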